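/- arXiv:1308.4698 — 6 statements merged into one kernel-verified Lean document; each statement's English description precedes it below -/
import Mathlib

section
/- Let A be an abelian category in which filtered colimits exist and are exact. An object A of 𝒜 is of finite type (every filtered increasing family of subobjects whose union is A is eventually stationary) if and only if for every functor F : 𝒯 → 𝒜 from a small filtered category, the canonical map colim_𝒯 Hom(A, F(-)) → Hom(A, colim_𝒯 F) is injective. -/
open CategoryTheory CategoryTheory.Limits
universe v u

/-- An object `A` is of *finite type* if every filtered (directed) increasing family of
subobjects of `A` whose supremum is `A` (i.e. whose only upper bound is `⊤`) is eventually
equal to `⊤`. -/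
def IsFiniteType {𝒜 : Type u} [Category.{v} 𝒜] (A : 𝒜) : Prop :=
  ∀ (ι : Type v) [Preorder ι] [IsDirected ι (· ≤ ·)] [Nonempty ι]
    (f : ι → Subobject A), Monotone f →
      (∀ g : Subobject A, (∀ i, f i ≤ g) → g = ⊤) → ∃ i, f i = ⊤

/-!
If `y : A ⟶ F j` dies in `colim F`, the kernels of `y ≫ F.map φ` for `φ : j ⟶ k` form a
filtered system of subobjects of `A`. By exactness of filtered colimits its colimit is the
kernel of the zero map `A ⟶ colim F`, i.e. all of `A`; finite type then makes one of these
kernels equal to `A`, which means `y ≫ F.map φ = 0`.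

Conversely, for a directed family `Aᵢ` of subobjects with supremum `A`, the projection
`A ⟶ colim (A ⧸ Aᵢ)` kills every `Aᵢ`, hence is zero, and injectivity on
`colim Hom(A, A ⧸ Aᵢ)` makes some projection `A ⟶ A ⧸ Aᵢ` zero already, i.e. `Aᵢ = A`.
-/

namespace CategoryTheory

lemma eq_zero_of_kernelSubobject_eq_top {C : Type*} [Category C] [HasZeroMorphisms C]
    {X Y : C} {f : X ⟶ Y} [HasKernel f] (h : kernelSubobject f = ⊤) : f = 0 := by
  simpa using (kernelSubobject_factors_iff f (𝟙 X)).1 (h ▸ Subobject.top_factors _)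

namespace Subobject

variable {C : Type*} [Category C]

lemma eq_top_of_forall_factors_of_epi [Balanced C] {J : Type*} [Category J] {K : J ⥤ C}
    {c : Cocone K} (hc : IsColimit c) {X : C} (φ : c.pt ⟶ X) [Epi φ] (P : Subobject X)
    (hP : ∀ j, P.Factors (c.ι.app j ≫ φ)) : P = ⊤ := by
  let c' : Cocone K :=
    { pt := P
      ι :=
        { app j := P.factorThru _ (hP j)
          naturality j j' u := by
            rw [← cancel_mono P.arrow]
            simp } }
  have hfac : hc.desc c' ≫ P.arrow = φ := hc.hom_ext fun j => by simp [c']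
  have : Epi P.arrow := epi_of_epi_fac hfac
  have : IsIso P.arrow := isIso_of_mono_of_epi _
  exact eq_top_of_isIso_arrow P

lemma eq_top_of_cokernel_π_eq_zero [Abelian C] {X : C} {P : Subobject X}
    (h : cokernel.π P.arrow = 0) : P = ⊤ := by
  have : Epi P.arrow := Abelian.epi_of_cokernel_π_eq_zero _ h
  have : IsIso P.arrow := isIso_of_mono_of_epi _
  exact eq_top_of_isIso_arrow P

variable [HasZeroMorphisms C] [HasCokernels C]

noncomputable def quotientFunctor (X : C) : Subobject X ⥤ C where
  obj P := cokernel P.arrow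
  map {P Q} h := cokernel.desc _ (cokernel.π _) (by
    rw [← ofLE_arrow h.le, Category.assoc, cokernel.condition, comp_zero])

lemma cokernel_π_comp_quotientFunctor_map {X : C} {P Q : Subobject X} (h : P ⟶ Q) :
    cokernel.π P.arrow ≫ (quotientFunctor X).map h = cokernel.π Q.arrow :=
  cokernel.π_desc _ _ _

end Subobject

section ExactColimits

variable {C : Type*} [Category C] [Abelian C] {J : Type*} [Category J] [IsConnected J]
  [HasColimitsOfShape J C] [HasExactColimitsOfShape J C]

lemma eq_top_of_forall_kernelSubobject_app_le {X : C} {G : J ⥤ C}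
    (η : (Functor.const J).obj X ⟶ G) {c : Cocone G} (hc : IsColimit c)
    (hη : ∀ j, η.app j ≫ c.ι.app j = 0) (P : Subobject X)
    (hP : ∀ j, kernelSubobject (η.app j) ≤ P) : P = ⊤ := by
  let φ : colimit (kernel η) ⟶ X :=
    IsColimit.map (colimit.isColimit _) (constCocone J X) (kernel.ι η)
  have hφ (j : J) : colimit.ι (kernel η) j ≫ φ = (kernel.ι η).app j :=
    (IsColimit.ι_map _ _ _ _).trans (Category.comp_id _)
  -- `colim (kernel η) ⟶ X ⟶ colim G` is exact, and its second map is zero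
  have : Epi φ :=
    (colim.exact_mapShortComplex
      ((ShortComplex.mk _ _ (kernel.condition η)).exact_of_f_is_kernel (kernelIsKernel η))
      (colimit.isColimit _) (isColimitConstCocone J X) hc φ 0
      (fun j => (hφ j).trans (Category.comp_id _).symm)
      (fun j => (Category.id_comp _).trans (hη j).symm)).epi_f rfl
  refine Subobject.eq_top_of_forall_factors_of_epi (colimit.isColimit _) φ P fun j => ?_
  rw [colimit.cocone_ι, hφ]
  exact Subobject.factors_of_le _ (hP j) (kernelSubobject_factors _ _ (by
    simpa only [NatTrans.comp_app, zero_app] using NatTrans.congr_app (kernel.condition η) j))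

end ExactColimits

lemma comp_ι_app_eq_zero_of_kernelSubobject_sup_eq_top {C : Type*} [Category C]
    [HasZeroMorphisms C] [HasKernels C] {J : Type*} [Category J] [IsFilteredOrEmpty J]
    {X : C} {G : J ⥤ C} (π : ∀ j, X ⟶ G.obj j) (hπ : ∀ {i j : J} (u : i ⟶ j), π i ≫ G.map u = π j)
    (htop : ∀ P : Subobject X, (∀ j, kernelSubobject (π j) ≤ P) → P = ⊤) (c : Cocone G) (j : J) :
    π j ≫ c.ι.app j = 0 := by
  have hconst (i j : J) : π i ≫ c.ι.app i = π j ≫ c.ι.app j := by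
    rw [← c.w (IsFiltered.leftToMax i j), ← c.w (IsFiltered.rightToMax i j), reassoc_of% hπ,
      reassoc_of% hπ]
  refine eq_zero_of_kernelSubobject_eq_top (htop _ fun i => ?_)
  rw [← hconst i j]
  exact kernelSubobject_comp_le _ _

end CategoryTheory

namespace IsFiniteType

variable {𝒜 : Type u} [Category.{v} 𝒜] {A : 𝒜}

lemma exists_eq_top_of_isFiltered (hA : IsFiniteType A) {J : Type v} [Category J]
    [IsFiltered J] (p : J → Subobject A) (hp : ∀ {i j : J} (_ : i ⟶ j), p i ≤ p j)
    (htop : ∀ P : Subobject A, (∀ j, p j ≤ P) → P = ⊤) : ∃ j, p j = ⊤ := by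
  let _ : Preorder J := Preorder.lift p
  have : IsDirected J (· ≤ ·) :=
    ⟨fun i j => ⟨IsFiltered.max i j, hp (IsFiltered.leftToMax i j),
      hp (IsFiltered.rightToMax i j)⟩⟩
  have : Nonempty J := IsFiltered.nonempty
  exact hA J p (fun _ _ h => h) htop

variable [Abelian 𝒜] [HasFilteredColimits 𝒜] [AB5 𝒜]

lemma exists_app_eq_zero (hA : IsFiniteType A) {J : Type v} [SmallCategory J] [IsFiltered J]
    {G : J ⥤ 𝒜} (η : (Functor.const J).obj A ⟶ G) {c : Cocone G} (hc : IsColimit c)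
    (hη : ∀ j, η.app j ≫ c.ι.app j = 0) : ∃ j, η.app j = 0 := by
  have hmono {i j : J} (u : i ⟶ j) : kernelSubobject (η.app i) ≤ kernelSubobject (η.app j) := by
    have hη' : η.app j = η.app i ≫ G.map u := by simpa using η.naturality u
    rw [hη']
    exact kernelSubobject_comp_le _ _
  have := IsFiltered.isConnected J
  obtain ⟨j, hj⟩ := hA.exists_eq_top_of_isFiltered _ hmono
    (eq_top_of_forall_kernelSubobject_app_le η hc hη)
  exact ⟨j, eq_zero_of_kernelSubobject_eq_top hj⟩

lemma exists_comp_map_eq_zero (hA : IsFiniteType A) {J : Type v} [SmallCategory J]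
    [IsFiltered J] {F : J ⥤ 𝒜} {c : Cocone F} (hc : IsColimit c) {j : J} (y : A ⟶ F.obj j)
    (hy : y ≫ c.ι.app j = 0) : ∃ (k : J) (φ : j ⟶ k), y ≫ F.map φ = 0 := by
  -- `Under j` is final in `J`, and `y` extends to a cone over it
  let η : (Functor.const (Under j)).obj A ⟶ Under.forget j ⋙ F :=
    { app t := y ≫ F.map t.hom
      naturality s t u := by
        dsimp
        rw [Category.id_comp, Category.assoc, ← F.map_comp, Under.w u] }
  obtain ⟨t, ht⟩ := hA.exists_app_eq_zero η
    ((Functor.Final.isColimitWhiskerEquiv (Under.forget j) c).symm hc)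
    (fun t => by simp [η, hy])
  exact ⟨t.right, t.hom, ht⟩

lemma exists_comp_map_eq_comp_map (hA : IsFiniteType A) {J : Type v} [SmallCategory J]
    [IsFiltered J] {F : J ⥤ 𝒜} {c : Cocone F} (hc : IsColimit c) {j : J}
    (y₁ y₂ : A ⟶ F.obj j) (hy : y₁ ≫ c.ι.app j = y₂ ≫ c.ι.app j) :
    ∃ (k : J) (φ : j ⟶ k), y₁ ≫ F.map φ = y₂ ≫ F.map φ := by
  obtain ⟨k, φ, hφ⟩ := hA.exists_comp_map_eq_zero hc (y₁ - y₂)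
    (by rw [Preadditive.sub_comp, hy, sub_self])
  exact ⟨k, φ, by rwa [Preadditive.sub_comp, sub_eq_zero] at hφ⟩

end IsFiniteType

/-- in an abelian category with (exact) filtered colimits, an object `A` is of
finite type iff for every functor `F` from a small filtered category the canonical map
`colim Hom(A, F ·) → Hom(A, colim F)` is injective (stated elementwise). -/
theorem finiteType_iff_hom_colimit_injective
    {𝒜 : Type u} [Category.{v} 𝒜] [Abelian 𝒜] [HasColimits 𝒜] [AB5 𝒜] (A : 𝒜) :
    IsFiniteType A ↔
      ∀ (ι : Type v) [SmallCategory ι] [IsFiltered ι] (F : ι ⥤ 𝒜)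
        (j k : ι) (f : A ⟶ F.obj j) (g : A ⟶ F.obj k),
          f ≫ colimit.ι F j = g ≫ colimit.ι F k →
            ∃ (l : ι) (u : j ⟶ l) (v : k ⟶ l), f ≫ F.map u = g ≫ F.map v := by
  constructor
  · intro hA ι _ _ F j k f g hfg
    obtain ⟨l, φ, hφ⟩ := hA.exists_comp_map_eq_comp_map (colimit.isColimit F)
      (f ≫ F.map (IsFiltered.leftToMax j k)) (g ≫ F.map (IsFiltered.rightToMax j k))
      (by simpa using hfg)
    exact ⟨l, IsFiltered.leftToMax j k ≫ φ, IsFiltered.rightToMax j k ≫ φ, by simpa using hφ⟩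
  · intro H ι _ _ _ f hf htop
    obtain ⟨i₀⟩ := ‹Nonempty ι›
    let G := hf.functor ⋙ Subobject.quotientFunctor A
    let π (i : ι) : A ⟶ G.obj i := cokernel.π (f i).arrow
    have hπ {i j : ι} (u : i ⟶ j) : π i ≫ G.map u = π j :=
      Subobject.cokernel_π_comp_quotientFunctor_map (hf.functor.map u)
    have hπ₀ := comp_ι_app_eq_zero_of_kernelSubobject_sup_eq_top π hπ
      (fun P hP => htop P fun i => (le_kernelSubobject _ _ (cokernel.condition _)).trans (hP i))
      (colimit.cocone G) i₀
    obtain ⟨l, u, v, huv⟩ := H ι G i₀ i₀ (π i₀) 0 (hπ₀.trans zero_comp.symm)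
    exact ⟨l, Subobject.eq_top_of_cokernel_π_eq_zero ((hπ u).symm.trans (huv.trans zero_comp))⟩
end

section
/- In an abelian category with exact filtered colimits, the class of objects of finite type is stable under quotients and extensions: if 0 → A → B → C → 0 is a short exact sequence, then (i) any quotient of a finite type object is of finite type, and (ii) if A and C are of finite type then B is of finite type. -/
open CategoryTheory CategoryTheory.Limits
universe v u

/-!
Subobjects of an object of an abelian category form a modular lattice, and for `p : X ⟶ Y` the
image `∃ₚ` is left adjoint to the preimage `p*`, with `∃ₚ p* t = t` when `p` is epi and
`p* ∃ₚ s = s ⊔ ker p`. For a quotient `p : A ↠ B`, an upper bound `h` of the preimages of an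
exhausting family of `B` contains `ker p` and has `∃ₚ h = B`, hence `h = A`. For an extension
`0 → X₁ → X₂ → X₃ → 0`, some `f i₀` maps onto `X₃`, so `f i₀ ⊔ X₁ = X₂`; by modularity the traces
`X₁ ⊓ f i` then exhaust `X₁`, so some `f i₁` contains `X₁`, and `f j ⊇ f i₀ ⊔ X₁` for `j ≥ i₀, i₁`.
-/

theorem le_of_forall_inf_le_of_sup_eq_top {α ι : Type*} [Lattice α] [OrderTop α]
    [IsModularLattice α] [Preorder ι] [IsDirected ι (· ≤ ·)] {f : ι → α} (hf : Monotone f)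
    (hf_top : ∀ g, (∀ i, f i ≤ g) → g = ⊤) {k m : α} {i₀ : ι} (hi₀ : f i₀ ⊔ k = ⊤)
    (hm : ∀ i, k ⊓ f i ≤ m) : k ≤ m := by
  have hsup : f i₀ ⊔ m ⊓ k = ⊤ := hf_top _ fun i => by
    obtain ⟨j, hij, hi₀j⟩ := directed_of (· ≤ ·) i i₀
    calc f i ≤ f j := hf hij
      _ = (f i₀ ⊔ k) ⊓ f j := by rw [hi₀, top_inf_eq]
      _ = f i₀ ⊔ k ⊓ f j := sup_inf_assoc_of_le _ (hf hi₀j)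
      _ ≤ f i₀ ⊔ m ⊓ k := sup_le_sup_left (le_inf (hm j) inf_le_left) _
  calc k = (m ⊓ k ⊔ f i₀) ⊓ k := by rw [sup_comm, hsup, top_inf_eq]
    _ = m ⊓ k ⊔ f i₀ ⊓ k := sup_inf_assoc_of_le _ inf_le_right
    _ ≤ m := sup_le inf_le_left (inf_comm k (f i₀) ▸ hm i₀)

namespace CategoryTheory

variable {C : Type u} [Category.{v} C] [Abelian C]

instance Abelian.regular : Regular C where
  hasCoequalizer_of_isKernelPair _ := inferInstance
  regularEpiIsStableUnderBaseChange := by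
    have : MorphismProperty.regularEpi C = .epimorphisms C := by
      ext X Y f
      exact ⟨fun ⟨⟨h⟩⟩ => h.epi, fun (_ : Epi f) => ⟨⟨regularEpiOfEpi f⟩⟩⟩
    rw [this]
    infer_instance

namespace Subobject

variable {X Y : C}

theorem le_of_comp_cokernel_π_eq_zero {s t : Subobject X}
    (h : s.arrow ≫ cokernel.π t.arrow = 0) : s ≤ t :=
  le_of_comm ((ShortComplex.exact_cokernel t.arrow).lift _ h)
    ((ShortComplex.exact_cokernel t.arrow).lift_f _ h)

theorem kernelSubobject_cokernel_π (s : Subobject X) :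
    kernelSubobject (cokernel.π s.arrow) = s :=
  le_antisymm (le_of_comp_cokernel_π_eq_zero (kernelSubobject_arrow_comp _))
    (le_kernelSubobject _ _ (cokernel.condition _))

theorem kernelSubobject_le_pullback (p : X ⟶ Y) (t : Subobject Y) :
    kernelSubobject p ≤ (pullback p).obj t :=
  le_of_factors ((pullback_factors_iff _ _ _).2 (by simp [factors_zero]))

theorem pullback_kernelSubobject {Z : C} (p : X ⟶ Y) (φ : Y ⟶ Z) :
    (pullback p).obj (kernelSubobject φ) = kernelSubobject (p ≫ φ) := by
  apply le_antisymm <;> apply le_of_factors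
  · rw [kernelSubobject_factors_iff, ← Category.assoc, ← kernelSubobject_factors_iff,
      ← pullback_factors_iff]
    exact factors_self _
  · rw [pullback_factors_iff, kernelSubobject_factors_iff, Category.assoc]
    exact kernelSubobject_arrow_comp _

theorem exists_top_of_epi (p : X ⟶ Y) [Epi p] : (Subobject.exists p).obj ⊤ = ⊤ := by
  have : Epi ((Subobject.exists p).obj ⊤).arrow := by
    rw [← imageFactorisation_F_m]
    exact epi_of_epi_fac (imageFactorisation p ⊤).F.fac
  have := isIso_of_mono_of_epi ((Subobject.exists p).obj ⊤).arrow
  exact eq_top_of_isIso_arrow _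

theorem exists_pullback_of_epi (p : X ⟶ Y) [Epi p] (t : Subobject Y) :
    (Subobject.exists p).obj ((pullback p).obj t) = t := by
  simpa [exists_top_of_epi] using Regular.exists_inf_pullback_eq_exists_inf p ⊤ t

/-- Since `p` is the cokernel of its kernel, `cokernel.π s.arrow` factors as `p ≫ φ`, which
exhibits `s` as a preimage under `p`. -/
theorem pullback_exists_le_of_kernelSubobject_le (p : X ⟶ Y) [Epi p] {s : Subobject X}
    (h : kernelSubobject p ≤ s) : (pullback p).obj ((Subobject.exists p).obj s) ≤ s := by
  have hker : kernel.ι p ≫ cokernel.π s.arrow = 0 := by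
    rw [← cancel_epi (kernelSubobjectIso p).hom, kernelSubobject_arrow_assoc, ← ofLE_arrow h,
      Category.assoc, cokernel.condition, comp_zero, comp_zero]
  have hs : (pullback p).obj (kernelSubobject (Abelian.epiDesc p _ hker)) = s := by
    rw [pullback_kernelSubobject, Abelian.comp_epiDesc, kernelSubobject_cokernel_π]
  have gc := (existsPullbackAdj p).gc
  exact (gc.monotone_u (gc.l_le hs.ge)).trans hs.le

theorem pullback_exists_eq_sup_kernelSubobject (p : X ⟶ Y) [Epi p] (s : Subobject X) :
    (pullback p).obj ((Subobject.exists p).obj s) = s ⊔ kernelSubobject p :=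
  have gc := (existsPullbackAdj p).gc
  le_antisymm
    ((gc.monotone_u (gc.monotone_l le_sup_left)).trans
      (pullback_exists_le_of_kernelSubobject_le p le_sup_right))
    (sup_le (gc.le_u_l s) (kernelSubobject_le_pullback p _))

theorem pullback_exists_of_mono (f : X ⟶ Y) [Mono f] (s : Subobject X) :
    (pullback f).obj ((Subobject.exists f).obj s) = s := by
  rw [exists_iso_map]
  exact pullback_map_self f s

instance isModularLattice : IsModularLattice (Subobject X) where
  sup_inf_le_assoc_of_le {x} y {z} hxz := by
    let π := cokernel.π x.arrow
    have hπ (s : Subobject X) : (pullback π).obj ((Subobject.exists π).obj s) = s ⊔ x := by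
      rw [pullback_exists_eq_sup_kernelSubobject, kernelSubobject_cokernel_π]
    refine le_of_eq ?_
    calc (x ⊔ y) ⊓ z = (y ⊔ x) ⊓ (z ⊔ x) := by rw [sup_comm x, sup_eq_left.2 hxz]
      _ = (pullback π).obj ((Subobject.exists π).obj y ⊓ (Subobject.exists π).obj z) := by
          rw [← hπ, ← hπ, (existsPullbackAdj π).gc.u_inf]
      _ = (pullback π).obj ((Subobject.exists π).obj (y ⊓ z)) := by
          rw [← Regular.exists_inf_pullback_eq_exists_inf, hπ z, sup_eq_left.2 hxz]
      _ = x ⊔ y ⊓ z := by rw [hπ, sup_comm]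

end Subobject

theorem ShortComplex.Exact.kernelSubobject_g_eq_exists_top {S : ShortComplex C} (hS : S.Exact)
    [Mono S.f] : kernelSubobject S.g = (Subobject.exists S.f).obj ⊤ := by
  rw [← (exact_iff_image_eq_kernel S).1 hS, imageSubobject_mono, Subobject.exists_iso_map,
    Subobject.map_top]

end CategoryTheory

section FiniteType

variable {𝒜 : Type u} [Category.{v} 𝒜] [Abelian 𝒜]

open CategoryTheory.Subobject hiding pullback

theorem IsFiniteType.of_epi {A B : 𝒜} (p : A ⟶ B) [Epi p] (hA : IsFiniteType A) :
    IsFiniteType B := by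
  intro ι _ _ _ f hf hf_top
  have gc := (existsPullbackAdj p).gc
  obtain ⟨i₀⟩ := ‹Nonempty ι›
  obtain ⟨i, hi⟩ : ∃ i, (Subobject.pullback p).obj (f i) = ⊤ :=
    hA ι _ (gc.monotone_u.comp hf) fun h hh => by
      have hp_h : (Subobject.exists p).obj h = ⊤ := hf_top _ fun i =>
        exists_pullback_of_epi p (f i) ▸ gc.monotone_l (hh i)
      rw [← sup_eq_left.2 ((kernelSubobject_le_pullback p _).trans (hh i₀)),
        ← pullback_exists_eq_sup_kernelSubobject, hp_h, pullback_top]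
  exact ⟨i, by rw [← exists_pullback_of_epi p (f i), hi, exists_top_of_epi]⟩

theorem IsFiniteType.of_shortExact {S : ShortComplex 𝒜} (hS : S.ShortExact)
    (h₁ : IsFiniteType S.X₁) (h₃ : IsFiniteType S.X₃) : IsFiniteType S.X₂ := by
  have := hS.mono_f
  have := hS.epi_g
  intro ι _ _ _ f hf hf_top
  have gc_f := (existsPullbackAdj S.f).gc
  have gc_g := (existsPullbackAdj S.g).gc
  obtain ⟨i₀, hi₀⟩ : ∃ i, (Subobject.exists S.g).obj (f i) = ⊤ :=
    h₃ ι _ (gc_g.monotone_l.comp hf) fun t ht => by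
      rw [← exists_pullback_of_epi S.g t, hf_top _ fun i => gc_g.le_u (ht i), exists_top_of_epi]
  have hi₀_sup : f i₀ ⊔ (Subobject.exists S.f).obj ⊤ = ⊤ := by
    rw [← hS.exact.kernelSubobject_g_eq_exists_top, ← pullback_exists_eq_sup_kernelSubobject, hi₀,
      pullback_top]
  obtain ⟨i₁, hi₁⟩ : ∃ i, (Subobject.pullback S.f).obj (f i) = ⊤ :=
    h₁ ι _ (gc_f.monotone_u.comp hf) fun h hh => by
      have : (Subobject.exists S.f).obj ⊤ ≤ (Subobject.exists S.f).obj h :=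
        le_of_forall_inf_le_of_sup_eq_top hf hf_top hi₀_sup fun i => by
          rw [← Regular.exists_inf_pullback_eq_exists_inf, top_inf_eq]
          exact gc_f.monotone_l (hh i)
      rw [← pullback_exists_of_mono S.f h, eq_top_iff, ← pullback_exists_of_mono S.f ⊤]
      exact gc_f.monotone_u this
  obtain ⟨j, hi₀j, hi₁j⟩ := directed_of (· ≤ ·) i₀ i₁
  exact ⟨j, top_le_iff.1 (hi₀_sup ▸ sup_le (hf hi₀j) ((gc_f.l_le hi₁.ge).trans (hf hi₁j)))⟩

end FiniteType

theorem isFiniteType_quotient_and_extension_general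
    {𝒜 : Type u} [Category.{v} 𝒜] [Abelian 𝒜] :
    (∀ (A B : 𝒜) (p : A ⟶ B), Epi p → IsFiniteType A → IsFiniteType B) ∧
    (∀ (S : ShortComplex 𝒜), S.ShortExact →
      IsFiniteType S.X₁ → IsFiniteType S.X₃ → IsFiniteType S.X₂) :=
  ⟨fun _ _ p _ hA => hA.of_epi p, fun _ hS h₁ h₃ => h₁.of_shortExact hS h₃⟩

/-- stability of finite type objects under quotients and extensions. -/
theorem isFiniteType_quotient_and_extension
    {𝒜 : Type u} [Category.{v} 𝒜] [Abelian 𝒜] [HasColimits 𝒜] [AB5 𝒜] :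
    (∀ (A B : 𝒜) (p : A ⟶ B), Epi p → IsFiniteType A → IsFiniteType B) ∧
    (∀ (S : ShortComplex 𝒜), S.ShortExact →
      IsFiniteType S.X₁ → IsFiniteType S.X₃ → IsFiniteType S.X₂) :=
  isFiniteType_quotient_and_extension_general
end

section
/- Let 𝒞 be a small category, 𝒜 an abelian category with exact filtered colimits, and F : 𝒞 → 𝒜 a functor. Then: (a) if F is of finite type, F has a finite support; (b) if F has a finite support and F(c) is of finite type in the category of End_𝒞(c)-objects of 𝒜 for every object c, then F is of finite type; (c) the class of functors with finite support is stable under quotients and extensions. -/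
open CategoryTheory CategoryTheory.Limits
universe v u

/-- A set `S` of objects is a *support* of `F` if every subfunctor of `F` agreeing with `F`
on all objects of `S` is all of `F`. -/
def IsSupport {𝒜 : Type u} [Category.{v} 𝒜] {C : Type v} [SmallCategory C]
    (S : Set C) (F : C ⥤ 𝒜) : Prop :=
  ∀ (G : C ⥤ 𝒜) (i : G ⟶ F), Mono i → (∀ s ∈ S, IsIso (i.app s)) → IsIso i

/-- `F` has *finite support* if it admits a finite support. -/
def HasFiniteSupport {𝒜 : Type u} [Category.{v} 𝒜] {C : Type v} [SmallCategory C]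
    (F : C ⥤ 𝒜) : Prop :=
  ∃ S : Set C, S.Finite ∧ IsSupport S F

/-- The value `F(c)`, as an object of the category `𝒜_{End(c)}` of `End(c)`-objects of `𝒜`,
realized as a functor `SingleObj (End c) ⥤ 𝒜`. -/
def endFunctor {𝒜 : Type u} [Category.{v} 𝒜] {C : Type v} [SmallCategory C]
    (F : C ⥤ 𝒜) (c : C) : SingleObj (CategoryTheory.End c) ⥤ 𝒜 where
  obj _ := F.obj c
  map m := F.map m
  map_id _ := F.map_id c
  map_comp f g := F.map_comp f g

/-!
A directed family of subobjects has `⊤` as its only upper bound iff the map to the ambient object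
from the coproduct of its members is epi, and for functors this is checked objectwise. So for (b)
finite type of each `F(c)` makes the family exhaust `F(c)` at some stage, and a finite support makes
finitely many objects suffice. For (a), the subfunctors generated by the `F(c)`, `c` in a finite
set `S`, exhaust `F` as `S` grows, and any `S` at which they already give all of `F` is a support.
For (c), a subfunctor `j : G ⟶ F` is all of `F` iff `cokernel.π j = 0`, and a map out of a functor
that vanishes on a support vanishes.
-/

theorem epi_sigmaDesc_iff_forall_eq_top {𝒟 : Type*} [Category 𝒟] [Abelian 𝒟] {A : 𝒟}
    {ι : Type*} {X : ι → 𝒟} [HasCoproduct X] (m : ∀ i, X i ⟶ A) [∀ i, Mono (m i)] :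
    Epi (Sigma.desc m) ↔ ∀ P : Subobject A, (∀ i, Subobject.mk (m i) ≤ P) → P = ⊤ := by
  constructor
  · intro _ P hP
    have hfac : Sigma.desc (fun i => Subobject.ofMkLE _ _ (hP i)) ≫ P.arrow = Sigma.desc m := by
      ext; simp
    have := epi_of_epi_fac hfac
    rw [← Subobject.isIso_arrow_iff_eq_top]
    exact isIso_of_mono_of_epi _
  · intro h
    have htop : imageSubobject (Sigma.desc m) = ⊤ :=
      h _ fun i => Subobject.mk_le_of_comm (Sigma.ι X i ≫ factorThruImageSubobject _) (by simp)
    have := (Subobject.isIso_arrow_iff_eq_top _).2 htop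
    rw [← imageSubobject_arrow_comp (Sigma.desc m)]
    infer_instance

theorem epi_sigmaDesc_iff_forall_app {K 𝒟 : Type*} [Category K] [Category 𝒟]
    [HasPushouts 𝒟] {ι : Type*} [HasColimitsOfShape (Discrete ι) 𝒟] {B : K ⥤ 𝒟}
    {X : ι → K ⥤ 𝒟} (m : ∀ i, X i ⟶ B) :
    Epi (Sigma.desc m) ↔ ∀ k, Epi (Sigma.desc fun i => (m i).app k) := by
  have hdesc (k : K) :
      (sigmaObjIso X k).inv ≫ (Sigma.desc m).app k = Sigma.desc fun i => (m i).app k := by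
    ext i
    simp [← NatTrans.comp_app]
  simp only [NatTrans.epi_iff_epi_app, ← hdesc, epi_comp_iff_of_epi]

section FunctorCategory

variable {K 𝒜 : Type*} [Category K] [Category 𝒜] [Abelian 𝒜]

theorem isIso_arrow_app_of_le {F : K ⥤ 𝒜} {P Q : Subobject F} (h : P ≤ Q) (k : K)
    [IsIso (P.arrow.app k)] : IsIso (Q.arrow.app k) := by
  have hfac : (Subobject.ofLE _ _ h).app k ≫ Q.arrow.app k = P.arrow.app k := by
    rw [← NatTrans.comp_app, Subobject.ofLE_arrow]
  have := epi_of_epi_fac hfac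
  exact isIso_of_mono_of_epi _

theorem cokernel_π_app_eq_zero {G F : K ⥤ 𝒜} (j : G ⟶ F) (k : K) [Epi (j.app k)] :
    (cokernel.π j).app k = 0 :=
  (cancel_epi (j.app k)).1 (by rw [← NatTrans.comp_app, cokernel.condition]; simp)

end FunctorCategory

section Support

variable {𝒜 : Type u} [Category.{v} 𝒜] [Abelian 𝒜] {C : Type v} [SmallCategory C]

theorem IsSupport.eq_zero_of_app_eq_zero {S : Set C} {F Q : C ⥤ 𝒜} (hS : IsSupport S F)
    (u : F ⟶ Q) (hu : ∀ s ∈ S, u.app s = 0) : u = 0 := by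
  have hker : ∀ s ∈ S, IsIso ((kernel.ι u).app s) := by
    intro s hs
    let ev := (evaluation C 𝒜).obj s
    have hcomp : kernelComparison u ev ≫ kernel.ι (ev.map u) = ev.map (kernel.ι u) :=
      kernelComparison_comp_ι u ev
    have : IsIso (kernel.ι (ev.map u)) := by
      change IsIso (kernel.ι (u.app s))
      rw [hu s hs]
      infer_instance
    change IsIso (ev.map (kernel.ι u))
    rw [← hcomp]
    infer_instance
  have := hS _ (kernel.ι u) inferInstance hker
  rw [← cancel_epi (kernel.ι u), kernel.condition, comp_zero]

theorem IsSupport.of_epi {S : Set C} {F G : C ⥤ 𝒜} (hS : IsSupport S F) (p : F ⟶ G) [Epi p] :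
    IsSupport S G := by
  intro G' j _ hj
  have hπ : p ≫ cokernel.π j = 0 := hS.eq_zero_of_app_eq_zero _ fun s hs => by
    have := hj s hs
    rw [NatTrans.comp_app, cokernel_π_app_eq_zero, comp_zero]
  have := Abelian.epi_of_cokernel_π_eq_zero j ((cancel_epi p).1 (by rw [hπ, comp_zero]))
  exact isIso_of_mono_of_epi j

theorem CategoryTheory.ShortComplex.ShortExact.isSupport_union {T : ShortComplex (C ⥤ 𝒜)}
    (hT : T.ShortExact) {S₁ S₃ : Set C} (h₁ : IsSupport S₁ T.X₁) (h₃ : IsSupport S₃ T.X₃) :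
    IsSupport (S₁ ∪ S₃) T.X₂ := by
  intro G j _ hj
  have := hT.epi_g
  have hf : T.f ≫ cokernel.π j = 0 := h₁.eq_zero_of_app_eq_zero _ fun s hs => by
    have := hj s (Or.inl hs)
    rw [NatTrans.comp_app, cokernel_π_app_eq_zero, comp_zero]
  obtain ⟨u, hu⟩ := CokernelCofork.IsColimit.desc' hT.exact.gIsCokernel _ hf
  change T.g ≫ u = cokernel.π j at hu
  have hu₀ : u = 0 := h₃.eq_zero_of_app_eq_zero u fun s hs => by
    have := hj s (Or.inr hs)
    rw [← cancel_epi (T.g.app s), ← NatTrans.comp_app, hu, cokernel_π_app_eq_zero, comp_zero]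
  have := Abelian.epi_of_cokernel_π_eq_zero j (by rw [← hu, hu₀, comp_zero])
  exact isIso_of_mono_of_epi j

end Support

section Generated

variable {𝒜 : Type u} [Category.{v} 𝒜] [Abelian 𝒜] [HasColimits 𝒜] {C : Type v} [SmallCategory C]

/-- The image of the counit `∐_{c ⟶ d} F(c) ⟶ F(d)`: the subfunctor generated by `F(c)`. -/
noncomputable def generatedSubobject (F : C ⥤ 𝒜) (c : C) : Subobject F :=
  imageSubobject ((evaluationAdjunctionRight 𝒜 c).counit.app F)

theorem generatedSubobject_le_mk {F G : C ⥤ 𝒜} (i : G ⟶ F) [Mono i] (c : C) [IsIso (i.app c)] :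
    generatedSubobject F c ≤ Subobject.mk i :=
  imageSubobject_le_mk i _
    ((evaluationLeftAdjoint 𝒜 c).map (inv (i.app c)) ≫
      (evaluationAdjunctionRight 𝒜 c).counit.app G) (by
    rw [Category.assoc, ← (evaluationAdjunctionRight 𝒜 c).counit_naturality,
      ← Functor.map_comp_assoc]
    simp)

theorem isIso_arrow_app_of_generatedSubobject_le {F : C ⥤ 𝒜} {c : C} {P : Subobject F}
    (h : generatedSubobject F c ≤ P) : IsIso (P.arrow.app c) := by
  unfold generatedSubobject at h
  have hfac : (factorThruImageSubobject _ ≫ Subobject.ofLE _ _ h) ≫ P.arrow =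
      (evaluationAdjunctionRight 𝒜 c).counit.app F := by
    rw [Category.assoc, Subobject.ofLE_arrow]
    exact imageSubobject_arrow_comp _
  have hsplit : ((evaluationAdjunctionRight 𝒜 c).unit.app (F.obj c) ≫
      (factorThruImageSubobject _ ≫ Subobject.ofLE _ _ h).app c) ≫ P.arrow.app c = 𝟙 _ := by
    rw [Category.assoc, ← NatTrans.comp_app, hfac]
    exact (evaluationAdjunctionRight 𝒜 c).right_triangle_components F
  have := epi_of_epi_fac hsplit
  exact isIso_of_mono_of_epi _

theorem hasFiniteSupport_of_isFiniteType {F : C ⥤ 𝒜} (hF : IsFiniteType F) :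
    HasFiniteSupport F := by
  classical
  obtain ⟨S, hS⟩ := hF (Finset C) (fun S => S.sup (generatedSubobject F))
    (fun _ _ h => Finset.sup_mono h) fun P hP => by
      rw [← Subobject.isIso_arrow_iff_eq_top]
      have (c : C) : IsIso (P.arrow.app c) := isIso_arrow_app_of_generatedSubobject_le
        ((Finset.le_sup (Finset.mem_singleton_self c)).trans (hP {c}))
      exact NatIso.isIso_of_isIso_app _
  refine ⟨S, S.finite_toSet, fun G i _ hi => ?_⟩
  rw [Subobject.isIso_iff_mk_eq_top, eq_top_iff, ← hS]
  exact Finset.sup_le fun s hs => by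
    have := hi s hs
    exact generatedSubobject_le_mk i s

end Generated

section EndomorphismAction

variable {𝒜 : Type u} [Category.{v} 𝒜] [Abelian 𝒜] [HasColimits 𝒜] {C : Type v} [SmallCategory C]

def endFunctorMap {F G : C ⥤ 𝒜} (η : F ⟶ G) (c : C) : endFunctor F c ⟶ endFunctor G c where
  app _ := η.app c
  naturality _ _ a := η.naturality a

theorem exists_isIso_arrow_app_of_isFiniteType_endFunctor {F : C ⥤ 𝒜} {c : C}
    (hc : IsFiniteType (endFunctor F c)) {ι : Type v} [Preorder ι] [IsDirected ι (· ≤ ·)]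
    [Nonempty ι] (f : ι → Subobject F) (hf : Monotone f)
    (hcover : Epi (Sigma.desc fun i => (f i).arrow.app c)) :
    ∃ i, IsIso ((f i).arrow.app c) := by
  let m (i : ι) := endFunctorMap (f i).arrow c
  have (i : ι) : Mono (m i) :=
    (NatTrans.mono_iff_mono_app _).2 fun _ => inferInstanceAs (Mono ((f i).arrow.app c))
  have hmono : Monotone fun i => Subobject.mk (m i) := fun i j hij =>
    Subobject.mk_le_mk_of_comm (endFunctorMap (Subobject.ofLE _ _ (hf hij)) c) (by
      ext
      exact congr_app (Subobject.ofLE_arrow (hf hij)) c)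
  obtain ⟨i, hi⟩ := hc ι _ hmono
    ((epi_sigmaDesc_iff_forall_eq_top m).1 ((epi_sigmaDesc_iff_forall_app m).2 fun _ => hcover))
  have := (Subobject.isIso_iff_mk_eq_top (m i)).2 hi
  exact ⟨i, inferInstanceAs (IsIso ((m i).app (SingleObj.star _)))⟩

theorem isFiniteType_of_hasFiniteSupport {F : C ⥤ 𝒜} (hF : HasFiniteSupport F)
    (hc : ∀ c, IsFiniteType (endFunctor F c)) : IsFiniteType F := by
  obtain ⟨S, hS, hsupp⟩ := hF
  intro ι _ _ _ f hf hcover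
  have hepi : Epi (Sigma.desc fun i => (f i).arrow) :=
    (epi_sigmaDesc_iff_forall_eq_top _).2 (by simpa only [Subobject.mk_arrow] using hcover)
  choose idx hidx using fun c => exists_isIso_arrow_app_of_isFiniteType_endFunctor (hc c) f hf
    ((epi_sigmaDesc_iff_forall_app _).1 hepi c)
  obtain ⟨i₀, hi₀⟩ := (hS.image idx).exists_le
  refine ⟨i₀, (Subobject.isIso_arrow_iff_eq_top _).1 (hsupp _ _ inferInstance fun s hs => ?_)⟩
  exact isIso_arrow_app_of_le (hf (hi₀ _ (Set.mem_image_of_mem idx hs))) s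

end EndomorphismAction

theorem finiteType_support_properties_general
    {𝒜 : Type u} [Category.{v} 𝒜] [Abelian 𝒜] [HasColimits 𝒜]
    {C : Type v} [SmallCategory C] :
    (∀ F : C ⥤ 𝒜, IsFiniteType F → HasFiniteSupport F) ∧
    (∀ F : C ⥤ 𝒜, HasFiniteSupport F →
      (∀ c : C, IsFiniteType (endFunctor F c)) → IsFiniteType F) ∧
    ((∀ (F G : C ⥤ 𝒜) (p : F ⟶ G), Epi p → HasFiniteSupport F → HasFiniteSupport G) ∧
      (∀ S : ShortComplex (C ⥤ 𝒜), S.ShortExact →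
        HasFiniteSupport S.X₁ → HasFiniteSupport S.X₃ → HasFiniteSupport S.X₂)) :=
  ⟨fun _ => hasFiniteSupport_of_isFiniteType, fun _ => isFiniteType_of_hasFiniteSupport,
    fun _ _ p _ ⟨S, hS, hsupp⟩ => ⟨S, hS, hsupp.of_epi p⟩,
    fun _ hT ⟨S₁, hS₁, h₁⟩ ⟨S₃, hS₃, h₃⟩ => ⟨S₁ ∪ S₃, hS₁.union hS₃, hT.isSupport_union h₁ h₃⟩⟩

/-- (a) a finite type functor has finite support; (b) a functor with finite
support which is pointwise of finite type over the endomorphism monoids is of finite type;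
(c) functors with finite support are stable under quotients and extensions. -/
theorem finiteType_support_properties
    {𝒜 : Type u} [Category.{v} 𝒜] [Abelian 𝒜] [HasColimits 𝒜] [AB5 𝒜]
    {C : Type v} [SmallCategory C] :
    (∀ F : C ⥤ 𝒜, IsFiniteType F → HasFiniteSupport F) ∧
    (∀ F : C ⥤ 𝒜, HasFiniteSupport F →
      (∀ c : C, IsFiniteType (endFunctor F c)) → IsFiniteType F) ∧
    ((∀ (F G : C ⥤ 𝒜) (p : F ⟶ G), Epi p → HasFiniteSupport F → HasFiniteSupport G) ∧
      (∀ S : ShortComplex (C ⥤ 𝒜), S.ShortExact →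
        HasFiniteSupport S.X₁ → HasFiniteSupport S.X₃ → HasFiniteSupport S.X₂)) :=
  finiteType_support_properties_general
end

section
/- Let 𝒞 be a small category, S and T sets of objects of 𝒞, 𝒜 an abelian category with colimits, and F : 𝒞 → 𝒜 a functor such that: (i) F vanishes on all objects not isomorphic to an element of S; (ii) F vanishes on all elements of T; (iii) every morphism s → x in 𝒞 with s ∈ S and F(x) = 0 factors through some morphism s → t with t ∈ T. Then S is a support of F and S ∪ T is a presentation support of F (i.e., the counit φ_! φ* F → F along the inclusion φ of the full subcategory on S ∪ T is an isomorphism). -/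
open CategoryTheory CategoryTheory.Limits
universe v u

/-- `S` is a *presentation support* of `F` if the counit of the left-Kan-extension
adjunction along the inclusion of the full subcategory on `S` is an isomorphism at `F`. -/
def IsPresentationSupport {𝒜 : Type u} [Category.{v} 𝒜] [HasColimits 𝒜]
    {C : Type v} [SmallCategory C] (S : Set C) (F : C ⥤ 𝒜) : Prop :=
  IsIso (((ObjectProperty.ι (· ∈ S)).lanAdjunction 𝒜).counit.app F)


/-!
Both claims are checked objectwise. If `x ≅ s` with `s ∈ S`, a subfunctor agreeing with `F` at
`s` agrees at `x`, and the comma category of `S ∪ T` over `x` has the terminal object `s ≅ x`, so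
the pointwise Kan-extension colimit at `x` is `F x`. Otherwise `F x = 0`: a subobject of `F x` is
zero, and by the factorisation hypothesis every object of the comma category over `x` maps to one
lying over `T`, where `F` vanishes, so the zero cocone at `x` is a colimit.
-/

namespace CategoryTheory

namespace Limits

variable {J C : Type*} [Category J] [Category C] {F : J ⥤ C}

noncomputable def isColimitOfIsTerminalOfIsIso (c : Cocone F) {X : J} (hX : IsTerminal X)
    [IsIso (c.ι.app X)] : IsColimit c :=
  IsColimit.ofIsoColimit (colimitOfDiagramTerminal hX F)
    (Cocone.ext (asIso (c.ι.app X)) fun j => by simp)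

def isColimitOfIsZeroPt [HasZeroMorphisms C] (c : Cocone F) (hc : IsZero c.pt)
    (hF : ∀ j, ∃ j', Nonempty (j ⟶ j') ∧ IsZero (F.obj j')) : IsColimit c where
  desc _ := 0
  fac s j := by
    obtain ⟨j', ⟨f⟩, hj'⟩ := hF j
    rw [comp_zero, ← s.w f, hj'.eq_of_src (s.ι.app j') 0, comp_zero]
  uniq _ _ _ := hc.eq_of_src _ _

end Limits

namespace Functor.LeftExtension

variable {C D H : Type*} [Category C] [Category D] [Category H] {L : C ⥤ D} {F : C ⥤ H}

noncomputable def isPointwiseLeftKanExtensionAtObjOfIsIso [L.Full] [L.Faithful]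
    (E : LeftExtension L F) (X : C) [IsIso (E.hom.app X)] :
    E.IsPointwiseLeftKanExtensionAt (L.obj X) :=
  have : IsIso ((E.coconeAt (L.obj X)).ι.app (CostructuredArrow.mk (𝟙 (L.obj X)))) :=
    inferInstanceAs (IsIso (E.hom.app X ≫ E.right.map (𝟙 (L.obj X))))
  isColimitOfIsTerminalOfIsIso _ CostructuredArrow.mkIdTerminal

def isPointwiseLeftKanExtensionAtOfIsZero [HasZeroMorphisms H] (E : LeftExtension L F) (Y : D)
    (hY : IsZero (E.right.obj Y))
    (h : ∀ (X : C) (f : L.obj X ⟶ Y),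
      ∃ (X' : C) (g : X ⟶ X') (f' : L.obj X' ⟶ Y), L.map g ≫ f' = f ∧ IsZero (F.obj X')) :
    E.IsPointwiseLeftKanExtensionAt Y :=
  isColimitOfIsZeroPt _ hY fun j => by
    obtain ⟨X', g, f', hw, hX'⟩ := h j.left j.hom
    exact ⟨CostructuredArrow.mk f', ⟨CostructuredArrow.homMk g hw⟩, hX'⟩

end Functor.LeftExtension

end CategoryTheory

section

open Functor

variable {𝒜 : Type u} [Category.{v} 𝒜] {C : Type v} [SmallCategory C]

abbrev extensionOfRestriction (S : Set C) (F : C ⥤ 𝒜) :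
    LeftExtension (ObjectProperty.ι (· ∈ S)) (ObjectProperty.ι (· ∈ S) ⋙ F) :=
  LeftExtension.mk F (𝟙 _)

variable {S : Set C} {F : C ⥤ 𝒜}

lemma isSupport_of_isZero [HasZeroMorphisms 𝒜] [HasPullbacks 𝒜]
    (hF : ∀ x : C, (¬ ∃ s ∈ S, Nonempty (x ≅ s)) → IsZero (F.obj x)) :
    IsSupport S F := by
  intro G i hi hS
  suffices ∀ x, IsIso (i.app x) from NatIso.isIso_of_isIso_app i
  intro x
  by_cases hx : ∃ s ∈ S, Nonempty (x ≅ s)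
  · obtain ⟨s, hs, ⟨e⟩⟩ := hx
    exact (NatTrans.isIso_app_iff_of_iso i e).2 (hS s hs)
  · have hFx := hF x hx
    have := (NatTrans.mono_iff_mono_app i).1 hi x
    exact (hFx.of_mono (i.app x)).isIso hFx _

lemma isPointwiseLeftKanExtensionAt_of_iso_mem {x s : C} (e : x ≅ s) (hs : s ∈ S) :
    (extensionOfRestriction S F).isPointwiseLeftKanExtensionAt x := by
  let p : ObjectProperty.FullSubcategory (· ∈ S) := ⟨s, hs⟩
  have : IsIso ((extensionOfRestriction S F).hom.app p) := inferInstanceAs (IsIso (𝟙 _))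
  exact ObjectProperty.prop_of_iso _ e.symm
    ⟨(extensionOfRestriction S F).isPointwiseLeftKanExtensionAtObjOfIsIso p⟩

lemma isPresentationSupport_of_isPointwiseLeftKanExtensionAt [HasColimits 𝒜]
    (h : ∀ x, (extensionOfRestriction S F).isPointwiseLeftKanExtensionAt x) :
    IsPresentationSupport S F :=
  (isIso_lanAdjunction_counit_app_iff _ _).2
    (LeftExtension.IsPointwiseLeftKanExtension.isLeftKanExtension fun x => (h x).some)

end

/-- if `F` vanishes outside the objects isomorphic to an element of `S`,
vanishes on `T`, and every morphism `s → x` with `s ∈ S` and `F(x) = 0` factors through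
some `s → t` with `t ∈ T`, then `S` is a support of `F` and `S ∪ T` is a presentation
support of `F`. -/
theorem isSupport_and_presentationSupport_of_vanishing
    {𝒜 : Type u} [Category.{v} 𝒜] [Abelian 𝒜] [HasColimits 𝒜]
    {C : Type v} [SmallCategory C] (S T : Set C) (F : C ⥤ 𝒜)
    (h1 : ∀ x : C, (¬ ∃ s ∈ S, Nonempty (x ≅ s)) → IsZero (F.obj x))
    (h2 : ∀ t ∈ T, IsZero (F.obj t))
    (h3 : ∀ s ∈ S, ∀ (x : C) (f : s ⟶ x), IsZero (F.obj x) →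
      ∃ t ∈ T, ∃ (g : s ⟶ t) (h : t ⟶ x), f = g ≫ h) :
    IsSupport S F ∧ IsPresentationSupport (S ∪ T) F := by
  refine ⟨isSupport_of_isZero h1,
    isPresentationSupport_of_isPointwiseLeftKanExtensionAt fun x => ?_⟩
  by_cases hx : ∃ s ∈ S, Nonempty (x ≅ s)
  · obtain ⟨s, hs, ⟨e⟩⟩ := hx
    exact isPointwiseLeftKanExtensionAt_of_iso_mem e (Or.inl hs)
  · refine ⟨Functor.LeftExtension.isPointwiseLeftKanExtensionAtOfIsZero _ x (h1 x hx) ?_⟩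
    rintro ⟨y, hyS | hyT⟩ f
    · obtain ⟨t, ht, g, h, rfl⟩ := h3 y hyS x f (h1 x hx)
      exact ⟨⟨t, Or.inr ht⟩, ObjectProperty.homMk g, h, rfl, h2 t ht⟩
    · exact ⟨⟨y, Or.inr hyT⟩, 𝟙 _, f, by simp, h2 y hyT⟩
end

section
/- Let 𝒞 be a small category, S a set of objects of 𝒞, 𝒜 an abelian category with colimits, and 0 → G → F → H → 0 a short exact sequence in Fct(𝒞, 𝒜). Then: (a) if S is a presentation support of both G and H, it is a presentation support of F; (b) if S is a support of G and a presentation support of F, then S is a presentation support of H. -/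
/-!
The counit `ε : φ_! φ* ⟶ 𝟭` is natural and `φ_! φ*` is right exact (restriction is exact and
`φ_!` is a left adjoint), so `ε` maps the right exact row `φ_! φ* G → φ_! φ* F → φ_! φ* H → 0`
to `0 → G → F → H → 0`. Part (a) is then the five lemma. For (b), `ε` is invertible at every
`s ∈ S` since `φ` is fully faithful, so the image of `ε_G` is a subfunctor of `G` that agrees
with `G` on `S`; hence `ε_G` is epi, and the four lemma shows that `ε_H` is an isomorphism.
-/

open CategoryTheory CategoryTheory.Limits
universe v u

namespace CategoryTheory.ShortComplex

variable {𝒞 : Type*} [Category 𝒞] [Abelian 𝒞] {S₁ S₂ : ShortComplex 𝒞} (φ : S₁ ⟶ S₂)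

lemma isIso_τ₂_of_exact_of_shortExact (h₁ : S₁.Exact) [Epi S₁.g] (h₂ : S₂.ShortExact)
    (hτ₁ : IsIso φ.τ₁) (hτ₃ : IsIso φ.τ₃) : IsIso φ.τ₂ :=
  have := h₂.mono_f
  have := mono_of_mono_of_mono_of_mono φ h₁ inferInstance inferInstance inferInstance
  have := epi_of_epi_of_epi_of_epi φ h₂.exact inferInstance inferInstance inferInstance
  isIso_of_mono_of_epi φ.τ₂

lemma mono_τ₃_of_epi_τ₁_of_mono_τ₂ [Epi S₁.g] (h₂ : S₂.Exact) [Epi φ.τ₁] [Mono φ.τ₂] :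
    Mono φ.τ₃ := by
  refine Preadditive.mono_of_cancel_zero _ fun {A} x₃ hx₃ => ?_
  obtain ⟨A₁, π₁, _, x₂, hx₂⟩ := surjective_up_to_refinements_of_epi S₁.g x₃
  obtain ⟨A₂, π₂, _, y₁, hy₁⟩ := h₂.exact_up_to_refinements (x₂ ≫ φ.τ₂) <| by
    rw [Category.assoc, φ.comm₂₃, ← Category.assoc, ← hx₂, Category.assoc, hx₃, comp_zero]
  obtain ⟨A₃, π₃, _, z₁, hz₁⟩ := surjective_up_to_refinements_of_epi φ.τ₁ y₁
  have hx₂' : π₃ ≫ π₂ ≫ x₂ = z₁ ≫ S₁.f := by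
    rw [← cancel_mono φ.τ₂]
    simp only [Category.assoc]
    rw [hy₁, reassoc_of% hz₁, φ.comm₁₂]
  rw [← cancel_epi (π₃ ≫ π₂ ≫ π₁), comp_zero]
  simp only [Category.assoc]
  rw [hx₂, reassoc_of% hx₂', S₁.zero, comp_zero]

lemma isIso_τ₃_of_epi_τ₁_of_isIso_τ₂ [Epi S₁.g] (h₂ : S₂.Exact) [Epi S₂.g] (hτ₁ : Epi φ.τ₁)
    (hτ₂ : IsIso φ.τ₂) : IsIso φ.τ₃ :=
  have := mono_τ₃_of_epi_τ₁_of_mono_τ₂ φ h₂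
  have : Epi φ.τ₃ := epi_of_epi_fac φ.comm₂₃.symm
  isIso_of_mono_of_epi φ.τ₃

end CategoryTheory.ShortComplex

namespace CategoryTheory.Adjunction

variable {𝒞 𝒟 : Type*} [Category 𝒞] [Category 𝒟] [Abelian 𝒞] [HasZeroMorphisms 𝒟]
  {L : 𝒟 ⥤ 𝒞} {R : 𝒞 ⥤ 𝒟} (adj : L ⊣ R) [PreservesFiniteColimits R]
  {E : ShortComplex 𝒞}

lemma isIso_counit_app_X₂_of_shortExact (hE : E.ShortExact)
    (h₁ : IsIso (adj.counit.app E.X₁)) (h₃ : IsIso (adj.counit.app E.X₃)) :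
    IsIso (adj.counit.app E.X₂) :=
  have := adj.isLeftAdjoint
  have := adj.isRightAdjoint
  have := hE.epi_g
  have : Epi (E.map (R ⋙ L)).g := (R ⋙ L).map_epi E.g
  ShortComplex.isIso_τ₂_of_exact_of_shortExact (E.mapNatTrans adj.counit)
    (hE.exact.map_of_epi_of_preservesCokernel _ inferInstance inferInstance) hE h₁ h₃

lemma isIso_counit_app_X₃_of_shortExact (hE : E.ShortExact)
    (h₁ : Epi (adj.counit.app E.X₁)) (h₂ : IsIso (adj.counit.app E.X₂)) :
    IsIso (adj.counit.app E.X₃) :=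
  have := adj.isLeftAdjoint
  have := adj.isRightAdjoint
  have := hE.epi_g
  have : Epi (E.map (𝟭 𝒞)).g := hE.epi_g
  have : Epi (E.map (R ⋙ L)).g := (R ⋙ L).map_epi E.g
  ShortComplex.isIso_τ₃_of_epi_τ₁_of_isIso_τ₂ (E.mapNatTrans adj.counit) hE.exact h₁ h₂

end CategoryTheory.Adjunction

lemma IsSupport.epi_of_epi_app {𝒜 : Type u} [Category.{v} 𝒜] [Abelian 𝒜] {C : Type v}
    [SmallCategory C] {S : Set C} {X Y : C ⥤ 𝒜} (hX : IsSupport S X) (f : Y ⟶ X)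
    (hf : ∀ s ∈ S, Epi (f.app s)) : Epi f := by
  have hι : IsIso (Abelian.image.ι f) := by
    refine hX _ _ inferInstance fun s hs => ?_
    have := hf s hs
    have : Epi ((Abelian.image.ι f).app s) :=
      epi_of_epi_fac (congr_app (Abelian.image.fac f) s)
    exact isIso_of_mono_of_epi _
  rw [← Abelian.image.fac f]
  infer_instance

namespace CategoryTheory.Functor

lemma isIso_lanAdjunction_counit_app_app_obj {C D H : Type*} [Category C] [Category D]
    [Category H] (L : C ⥤ D) [L.Full] [L.Faithful] [∀ F : C ⥤ H, L.HasPointwiseLeftKanExtension F]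
    (G : D ⥤ H) (X : C) : IsIso (((L.lanAdjunction H).counit.app G).app (L.obj X)) := by
  have : IsIso ((L.lanUnit.app (L ⋙ G)).app X ≫
      ((L.lanAdjunction H).counit.app G).app (L.obj X)) := by
    rw [lanUnit_app_app_lanAdjunction_counit_app_app]
    infer_instance
  exact IsIso.of_isIso_comp_left ((L.lanUnit.app (L ⋙ G)).app X) _

end CategoryTheory.Functor

/-- given a short exact sequence `0 → G → F → H → 0` of functors,
(a) if `S` is a presentation support of `G` and `H` then it is one of `F`;
(b) if `S` is a support of `G` and a presentation support of `F`, then it is a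
presentation support of `H`. -/
theorem presentationSupport_of_shortExact
    {𝒜 : Type u} [Category.{v} 𝒜] [Abelian 𝒜] [HasColimits 𝒜]
    {C : Type v} [SmallCategory C] (S : Set C)
    (E : ShortComplex (C ⥤ 𝒜)) (hE : E.ShortExact) :
    (IsPresentationSupport S E.X₁ → IsPresentationSupport S E.X₃ →
      IsPresentationSupport S E.X₂) ∧
    (IsSupport S E.X₁ → IsPresentationSupport S E.X₂ →
      IsPresentationSupport S E.X₃) := by
  let φ := ObjectProperty.ι (· ∈ S)
  let adj := φ.lanAdjunction 𝒜
  refine ⟨adj.isIso_counit_app_X₂_of_shortExact hE, fun hX₁ h₂ => ?_⟩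
  refine adj.isIso_counit_app_X₃_of_shortExact hE (hX₁.epi_of_epi_app _ fun s hs => ?_) h₂
  have := φ.isIso_lanAdjunction_counit_app_app_obj E.X₁ ⟨s, hs⟩
  exact inferInstanceAs (Epi ((adj.counit.app E.X₁).app (φ.obj ⟨s, hs⟩)))
end

section
/- Let ℳ be a small symmetric monoidal category whose unit is initial and which has a finite weak monoidal generating set {a_1, …, a_n}. Then there exists a strict symmetric monoidal functor Φ : Θ^n → ℳ (where Θ is the category of finite sets and injections) which is weakly essentially surjective: every object of ℳ is a direct summand of an object in the image of Φ. Consequently, the restriction functor Φ* : Fct(ℳ, 𝒜) → Fct(Θ^n, 𝒜) is exact and faithful for any abelian category 𝒜, and a functor F : ℳ → 𝒜 is noetherian whenever Φ*F is noetherian. -/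
open CategoryTheory CategoryTheory.Limits
universe v u

/-- The category `Θ` of finite sets with injections, with skeletal objects `ℕ`
(the object `n` standing for `{1,…,n}`) and morphisms the injections. -/
def Theta : Type := ℕ

/-- The object of `Θ` corresponding to a natural number. -/
def Theta.mk (n : ℕ) : Theta := n

/-- The cardinality of an object of `Θ`. -/
def Theta.card (n : Theta) : ℕ := n

instance : Category.{0} Theta where
  Hom m n := Fin m.card ↪ Fin n.card
  id _ := Function.Embedding.refl _
  comp f g := f.trans g

/-- The endofunctor `x ⊔ −` of `Θ` (disjoint union with a fixed finite set `x` on the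
left). -/
def sh (x : ℕ) : Theta ⥤ Theta where
  obj n := Theta.mk (x + n.card)
  map {m n} f :=
    (finSumFinEquiv.symm.toEmbedding.trans
      ((Function.Embedding.refl (Fin x)).sumMap f)).trans finSumFinEquiv.toEmbedding
  map_id := by
    intro n
    apply Function.Embedding.ext
    intro i
    show finSumFinEquiv (Sum.map _ _ (finSumFinEquiv.symm i)) = i
    conv_rhs => rw [← Equiv.apply_symm_apply finSumFinEquiv i]
    congr 1
    generalize finSumFinEquiv.symm i = s
    rcases s with j | j <;> rfl
  map_comp := by
    intro a b c f g
    apply Function.Embedding.ext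
    intro i
    show finSumFinEquiv (Sum.map _ _ (finSumFinEquiv.symm i)) =
      finSumFinEquiv (Sum.map _ _
        (finSumFinEquiv.symm (finSumFinEquiv (Sum.map _ _ (finSumFinEquiv.symm i)))))
    rw [Equiv.symm_apply_apply]
    congr 1
    generalize finSumFinEquiv.symm i = s
    rcases s with j | j <;> rfl


open CategoryTheory.MonoidalCategory

/-- The monoidal sum of a finite list of objects. -/
def msum {ℳ : Type v} [Category ℳ] [MonoidalCategory ℳ] : List ℳ → ℳ :=
  fun l => l.foldr (fun a b => a ⊗ b) (𝟙_ ℳ)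

/-!
`Φ` sends `p : Fin n → Θ` to `⨂ᵢ aᵢ^{⊗ pᵢ}`. Since the unit is initial, an injection `m ↪ k`
acts through `m ≤ k` alone, each new factor `aᵢ` being inserted by the unique map `𝟙_ ℳ ⟶ aᵢ`.
With the braiding `Φ` turns sums into tensor products, so its essential image contains every
monoidal sum of the `aᵢ`, and every object of `ℳ` is a retract of some `Φ p`.

Restriction along a functor `Φ` such that every object is a retract of some `Φ c` is
faithful, and it reflects inclusions of subfunctors: a factorisation over the objects `Φ c`
is transported to any object through the retraction. Hence it reflects noetherianity;
exactness holds because limits and colimits of functors are computed pointwise.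
-/

universe w₁ w₂ w₃ w₄ w₅ w₆

def Theta.cardFunctor : Theta ⥤ ℕ where
  obj := Theta.card
  map f := homOfLE (Fin.nonempty_embedding_iff.1 ⟨f⟩)

section Monoidal

variable {ℳ : Type w₁} [Category.{w₂} ℳ] [MonoidalCategory ℳ]

def msumAppendIso : ∀ l₁ l₂ : List ℳ, msum (l₁ ++ l₂) ≅ msum l₁ ⊗ msum l₂
  | [], l₂ => (λ_ (msum l₂)).symm
  | a :: l₁, l₂ => whiskerLeftIso a (msumAppendIso l₁ l₂) ≪≫ (α_ a (msum l₁) (msum l₂)).symm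

lemma prop_msum {P : ObjectProperty ℳ} (hunit : P (𝟙_ ℳ))
    (htensor : ∀ X Y, P X → P Y → P (X ⊗ Y)) : ∀ l : List ℳ, (∀ b ∈ l, P b) → P (msum l)
  | [], _ => hunit
  | b :: l, hl => htensor b (msum l) (hl b List.mem_cons_self)
      (prop_msum hunit htensor l fun x hx => hl x (List.mem_cons_of_mem b hx))

variable (hI : IsInitial (𝟙_ ℳ))

def powerFunctor (a : ℳ) : Theta ⥤ ℳ :=
  Theta.cardFunctor ⋙ Functor.ofSequence fun k =>
    ((λ_ _).inv ≫ hI.to a ▷ _ : msum (List.replicate k a) ⟶ msum (List.replicate (k + 1) a))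

def powerFunctorObjAddIso (a : ℳ) (m n : ℕ) :
    (powerFunctor hI a).obj (Theta.mk (m + n)) ≅
      (powerFunctor hI a).obj (Theta.mk m) ⊗ (powerFunctor hI a).obj (Theta.mk n) :=
  eqToIso (congrArg msum (List.replicate_add m n a)) ≪≫ msumAppendIso _ _

def thetaPowFunctor : ∀ {n : ℕ}, (Fin n → ℳ) → ((Fin n → Theta) ⥤ ℳ)
  | 0, _ => (Functor.const _).obj (𝟙_ ℳ)
  | _ + 1, a => (Pi.eval _ 0 ⋙ powerFunctor hI (a 0)) ⊗
      (Pi.comap _ Fin.succ ⋙ thetaPowFunctor (Fin.tail a))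

lemma thetaPowFunctor_obj_zero : ∀ {n : ℕ} (a : Fin n → ℳ),
    Nonempty ((thetaPowFunctor hI a).obj (fun _ => Theta.mk 0) ≅ 𝟙_ ℳ)
  | 0, _ => ⟨Iso.refl _⟩
  | _ + 1, a =>
    let ⟨e⟩ := thetaPowFunctor_obj_zero (Fin.tail a)
    ⟨whiskerLeftIso _ e ≪≫ λ_ (𝟙_ ℳ)⟩

lemma thetaPowFunctor_essImage_single : ∀ {n : ℕ} (a : Fin n → ℳ) (i : Fin n),
    (thetaPowFunctor hI a).essImage (a i)
  | 0, _, i => i.elim0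
  | _ + 1, a, i => by
    induction i using Fin.cases with
    | zero =>
      obtain ⟨e⟩ := thetaPowFunctor_obj_zero hI (Fin.tail a)
      exact ⟨Fin.cons (Theta.mk 1) fun _ => Theta.mk 0, ⟨tensorIso (ρ_ (a 0)) e ≪≫ ρ_ (a 0)⟩⟩
    | succ j =>
      obtain ⟨p, ⟨e⟩⟩ := thetaPowFunctor_essImage_single (Fin.tail a) j
      exact ⟨Fin.cons (Theta.mk 0) p, ⟨whiskerLeftIso _ e ≪≫ λ_ _⟩⟩

end Monoidal

section Braided

variable {ℳ : Type w₁} [Category.{w₂} ℳ] [MonoidalCategory ℳ] [BraidedCategory ℳ]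

def tensorTensorTensorComm (W X Y Z : ℳ) : (W ⊗ X) ⊗ (Y ⊗ Z) ≅ (W ⊗ Y) ⊗ (X ⊗ Z) :=
  ⟨tensorμ W X Y Z, tensorδ W X Y Z, tensorμ_tensorδ W X Y Z, tensorδ_tensorμ W X Y Z⟩

variable (hI : IsInitial (𝟙_ ℳ))

lemma thetaPowFunctor_obj_add : ∀ {n : ℕ} (a : Fin n → ℳ) (p q : Fin n → Theta),
    Nonempty ((thetaPowFunctor hI a).obj (fun i => Theta.mk ((p i).card + (q i).card)) ≅
      (thetaPowFunctor hI a).obj p ⊗ (thetaPowFunctor hI a).obj q)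
  | 0, _, _, _ => ⟨(λ_ (𝟙_ ℳ)).symm⟩
  | _ + 1, a, p, q =>
    let ⟨e⟩ := thetaPowFunctor_obj_add (Fin.tail a) (Fin.tail p) (Fin.tail q)
    ⟨tensorIso (powerFunctorObjAddIso hI (a 0) (p 0).card (q 0).card) e ≪≫
      tensorTensorTensorComm _ _ _ _⟩

lemma msum_mem_essImage_thetaPowFunctor {n : ℕ} (a : Fin n → ℳ) (l : List ℳ)
    (hl : ∀ b ∈ l, ∃ i, b = a i) : (thetaPowFunctor hI a).essImage (msum l) := by
  refine prop_msum ?_ ?_ l ?_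
  · exact ⟨_, thetaPowFunctor_obj_zero hI a⟩
  · rintro X Y ⟨p, ⟨eX⟩⟩ ⟨q, ⟨eY⟩⟩
    obtain ⟨e⟩ := thetaPowFunctor_obj_add hI a p q
    exact ⟨_, ⟨e ≪≫ tensorIso eX eY⟩⟩
  · rintro b hb
    obtain ⟨i, rfl⟩ := hl b hb
    exact thetaPowFunctor_essImage_single hI a i

lemma exists_retract_thetaPowFunctor_obj {n : ℕ} (a : Fin n → ℳ)
    (hgen : ∀ m : ℳ, ∃ l : List ℳ, (∀ b ∈ l, ∃ i, b = a i) ∧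
      ∃ (ι : m ⟶ msum l) (r : msum l ⟶ m), ι ≫ r = 𝟙 m) (m : ℳ) :
    ∃ p, Nonempty (Retract m ((thetaPowFunctor hI a).obj p)) := by
  obtain ⟨l, hl, ι, r, hιr⟩ := hgen m
  obtain ⟨p, ⟨e⟩⟩ := msum_mem_essImage_thetaPowFunctor hI a l hl
  exact ⟨p, ⟨(Retract.mk ι r hιr).trans (Retract.ofIso e.symm)⟩⟩

end Braided

section MapSubobject

variable {C : Type w₁} [Category.{w₂} C] {D : Type w₃} [Category.{w₄} D]
  (G : C ⥤ D) [G.PreservesMonomorphisms]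

def CategoryTheory.Functor.mapSubobject {X : C} : Subobject X → Subobject (G.obj X) :=
  Subobject.lift (fun _ f _ => Subobject.mk (G.map f)) fun _ _ f g _ _ e he =>
    Subobject.mk_eq_mk_of_comm _ _ (G.mapIso e) (by rw [Functor.mapIso_hom, ← G.map_comp, he])

lemma CategoryTheory.Functor.mapSubobject_mk {X Y : C} (f : Y ⟶ X) [Mono f] :
    G.mapSubobject (Subobject.mk f) = Subobject.mk (G.map f) :=
  Subobject.lift_mk _ f

lemma CategoryTheory.Functor.mapSubobject_monotone {X : C} :
    Monotone (G.mapSubobject (X := X)) := by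
  intro S T h
  rw [← Subobject.mk_arrow S, ← Subobject.mk_arrow T] at h ⊢
  rw [G.mapSubobject_mk, G.mapSubobject_mk]
  exact Subobject.mk_le_mk_of_comm (G.map (Subobject.ofMkLEMk _ _ h))
    (by rw [← G.map_comp, Subobject.ofMkLEMk_comp])

lemma CategoryTheory.Functor.isNoetherianObject_of_mapSubobject_reflects_le {X : C}
    (h : ∀ S T : Subobject X, G.mapSubobject S ≤ G.mapSubobject T → S ≤ T)
    [IsNoetherianObject (G.obj X)] : IsNoetherianObject X :=
  (isNoetherianObject.is_iff X).2 <|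
    (OrderEmbedding.ofMapLEIff G.mapSubobject fun S T =>
      ⟨h S T, fun hST => G.mapSubobject_monotone hST⟩).wellFoundedGT

end MapSubobject

section Restriction

variable {C : Type w₁} [Category.{w₂} C] {D : Type w₃} [Category.{w₄} D]
  {A : Type w₅} [Category.{w₆} A]

lemma CategoryTheory.Retract.app_eq {X Y : D} (h : Retract X Y) {F G : D ⥤ A} (α : F ⟶ G) :
    α.app X = F.map h.i ≫ α.app Y ≫ G.map h.r := by
  rw [α.naturality_assoc, ← G.map_comp, h.retract, G.map_id, Category.comp_id]

variable {Φ : C ⥤ D} (hΦ : ∀ d, ∃ c, Nonempty (Retract d (Φ.obj c)))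
include hΦ

lemma faithful_whiskeringLeft_obj_of_retract :
    ((Functor.whiskeringLeft C D A).obj Φ).Faithful where
  map_injective {F G} α β h := by
    ext d
    obtain ⟨c, ⟨r⟩⟩ := hΦ d
    rw [r.app_eq α, r.app_eq β]
    exact congrArg (fun γ => F.map r.i ≫ γ ≫ G.map r.r) (congr_app h c)

variable [HasPullbacks A]

lemma exists_comp_eq_of_whiskerLeft {F P Q : D ⥤ A} (f : P ⟶ F) (g : Q ⟶ F) [Mono g]
    (k : Φ ⋙ P ⟶ Φ ⋙ Q) (hk : k ≫ Φ.whiskerLeft g = Φ.whiskerLeft f) :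
    ∃ t : P ⟶ Q, t ≫ g = f := by
  choose c r using hΦ
  let t (d : D) : P.obj d ⟶ Q.obj d := P.map (r d).some.i ≫ k.app (c d) ≫ Q.map (r d).some.r
  have ht (d : D) : t d ≫ g.app d = f.app d := by
    have hkc : k.app (c d) ≫ g.app (Φ.obj (c d)) = f.app (Φ.obj (c d)) := congr_app hk (c d)
    simp only [t, Category.assoc, g.naturality, reassoc_of% hkc]
    exact ((r d).some.app_eq f).symm
  refine ⟨{ app := t, naturality := fun d d' u => ?_ }, NatTrans.ext (funext ht)⟩
  rw [← cancel_mono (g.app d'), Category.assoc, ht, Category.assoc, g.naturality,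
    reassoc_of% (ht d), f.naturality]

lemma whiskeringLeft_mapSubobject_reflects_le {F : D ⥤ A} (S T : Subobject F)
    (h : ((Functor.whiskeringLeft C D A).obj Φ).mapSubobject S ≤
      ((Functor.whiskeringLeft C D A).obj Φ).mapSubobject T) : S ≤ T := by
  rw [← Subobject.mk_arrow S, ← Subobject.mk_arrow T] at h ⊢
  rw [Functor.mapSubobject_mk, Functor.mapSubobject_mk] at h
  obtain ⟨t, ht⟩ := exists_comp_eq_of_whiskerLeft hΦ _ _ _ (Subobject.ofMkLEMk_comp h)
  exact Subobject.mk_le_mk_of_comm t ht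

lemma isNoetherianObject_of_whiskeringLeft_obj {F : D ⥤ A}
    (hF : IsNoetherianObject (((Functor.whiskeringLeft C D A).obj Φ).obj F)) :
    IsNoetherianObject F :=
  Functor.isNoetherianObject_of_mapSubobject_reflects_le _
    (whiskeringLeft_mapSubobject_reflects_le hΦ)

end Restriction

/-- if `ℳ` is a small symmetric monoidal category with initial unit and a
finite weak monoidal generating set `a₁, …, aₙ`, then there is a (symmetric monoidal)
functor `Φ : Θⁿ ⥤ ℳ` — monoidal in the sense that it sends sums to tensor products and
the empty tuple to the unit — which is weakly essentially surjective: every object of `ℳ`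
is a direct summand of an object in the image of `Φ`. Consequently, for any abelian
category `𝒜`, the restriction functor `Φ* : Fct(ℳ, 𝒜) → Fct(Θⁿ, 𝒜)` is exact and
faithful, and a functor `F : ℳ ⥤ 𝒜` is noetherian whenever `Φ* F` is. -/
theorem exists_weakly_essentially_surjective_from_theta_pow
    {ℳ : Type} [SmallCategory ℳ] [MonoidalCategory ℳ] [SymmetricCategory ℳ]
    (hI : CategoryTheory.Limits.IsInitial (𝟙_ ℳ))
    (n : ℕ) (a : Fin n → ℳ)
    (hgen : ∀ m : ℳ, ∃ l : List ℳ, (∀ b ∈ l, ∃ i, b = a i) ∧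
      ∃ (ι : m ⟶ msum l) (r : msum l ⟶ m), ι ≫ r = 𝟙 m) :
    ∃ Φ : (Fin n → Theta) ⥤ ℳ,
      (∀ p q : Fin n → Theta,
        Nonempty (Φ.obj (fun i => Theta.mk ((p i).card + (q i).card)) ≅
          Φ.obj p ⊗ Φ.obj q)) ∧
      Nonempty (Φ.obj (fun _ => Theta.mk 0) ≅ 𝟙_ ℳ) ∧
      (∀ m : ℳ, ∃ (p : Fin n → Theta) (ι : m ⟶ Φ.obj p) (r : Φ.obj p ⟶ m),
        ι ≫ r = 𝟙 m) ∧
      (∀ (𝒜 : Type u) [Category.{v} 𝒜] [Abelian 𝒜],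
        Limits.PreservesFiniteLimits ((Functor.whiskeringLeft (Fin n → Theta) ℳ 𝒜).obj Φ) ∧
        Limits.PreservesFiniteColimits ((Functor.whiskeringLeft (Fin n → Theta) ℳ 𝒜).obj Φ) ∧
        ((Functor.whiskeringLeft (Fin n → Theta) ℳ 𝒜).obj Φ).Faithful ∧
        ∀ F : ℳ ⥤ 𝒜,
          IsNoetherianObject (((Functor.whiskeringLeft (Fin n → Theta) ℳ 𝒜).obj Φ).obj F) →
            IsNoetherianObject F) := by
  have hΦ := exists_retract_thetaPowFunctor_obj hI a hgen
  refine ⟨thetaPowFunctor hI a, thetaPowFunctor_obj_add hI a, thetaPowFunctor_obj_zero hI a,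
    fun m => ?_, fun 𝒜 _ _ => ⟨inferInstance, inferInstance,
      faithful_whiskeringLeft_obj_of_retract hΦ,
      fun _ => isNoetherianObject_of_whiskeringLeft_obj hΦ⟩⟩
  obtain ⟨p, ⟨r⟩⟩ := hΦ m
  exact ⟨p, r.i, r.r, r.retract⟩
end
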